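/- arXiv:2604.01077 — 2 statements merged into one kernel-verified Lean document; each statement's English description precedes it below -/
import Mathlib

section
/- Bihari–LaSalle inequality: let ω : ℝ₊ → ℝ₊ be continuous, increasing, positive on (0,∞), and let G(s) = ∫₁ˢ dτ/ω(τ). Suppose u : [0,T] → ℝ₊ is continuous and satisfies u(t) ≤ a + ∫₀ᵗ ω(u(s)) g(s) ds for all t ∈ [0,T], where a > 0 and g ∈ L¹([0,T]) is nonnegative. Then u(t) ≤ G⁻¹(G(a) + ∫₀ᵗ g(s) ds) for all t for which the right-hand side is defined. -/
open MeasureTheory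

/-- Bihari–LaSalle inequality: if `u t ≤ a + ∫₀ᵗ ω(u s) g s ds` with `a > 0`,
`g ≥ 0` integrable and ω continuous, increasing, positive on `(0,∞)`, then
`u t ≤ G⁻¹(G a + ∫₀ᵗ g)` whenever the right-hand side is defined, i.e. whenever
there is `c > 0` with `G c = G a + ∫₀ᵗ g`, where `G s = ∫₁ˢ dτ/ω(τ)`. -/
theorem bihari_lasalle
    (ω : ℝ → ℝ) (hω_cont : Continuous ω)
    (hω_mono : StrictMonoOn ω (Set.Ici 0))
    (hω_pos : ∀ s : ℝ, 0 < s → 0 < ω s)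
    (G : ℝ → ℝ) (hG : ∀ s : ℝ, G s = ∫ τ in (1:ℝ)..s, 1 / ω τ)
    (T a : ℝ) (ha : 0 < a)
    (u g : ℝ → ℝ)
    (hu_cont : ContinuousOn u (Set.Icc 0 T))
    (hu_nonneg : ∀ t ∈ Set.Icc (0:ℝ) T, 0 ≤ u t)
    (hg_int : IntegrableOn g (Set.Icc 0 T))
    (hg_nonneg : ∀ t ∈ Set.Icc (0:ℝ) T, 0 ≤ g t)
    (hineq : ∀ t ∈ Set.Icc (0:ℝ) T, u t ≤ a + ∫ s in (0:ℝ)..t, ω (u s) * g s) :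
    ∀ t ∈ Set.Icc (0:ℝ) T, ∀ c : ℝ, 0 < c →
      G c = G a + ∫ s in (0:ℝ)..t, g s → u t ≤ c := by
  -- basic facts about ω
  have hω0 : (0:ℝ) ≤ ω 0 := by
    have h1 : Filter.Tendsto ω (nhdsWithin 0 (Set.Ioi 0)) (nhds (ω 0)) :=
      (hω_cont.tendsto 0).mono_left nhdsWithin_le_nhds
    refine ge_of_tendsto h1 ?_
    filter_upwards [self_mem_nhdsWithin] with s hs
    exact (hω_pos s hs).le
  have hωmono : MonotoneOn ω (Set.Ici 0) := hω_mono.monotoneOn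
  have hωnn : ∀ s : ℝ, 0 ≤ s → 0 ≤ ω s := by
    intro s hs
    exact hω0.trans (hωmono (Set.self_mem_Ici) hs hs)
  -- 1/ω is continuous on (0, ∞)
  have hinv : ContinuousOn (fun τ => 1 / ω τ) (Set.Ioi (0:ℝ)) :=
    continuousOn_const.div hω_cont.continuousOn (fun x hx => (hω_pos x hx).ne')
  have hinv_int : ∀ x y : ℝ, 0 < x → 0 < y →
      IntervalIntegrable (fun τ => 1 / ω τ) volume x y := by
    intro x y hx hy
    refine (hinv.mono ?_).intervalIntegrable
    intro τ hτ
    exact lt_of_lt_of_le (lt_min hx hy) hτ.1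
  -- difference formula for G
  have hGdiff : ∀ x y : ℝ, 0 < x → 0 < y →
      G y - G x = ∫ τ in x..y, 1 / ω τ := by
    intro x y hx hy
    rw [hG, hG, ← intervalIntegral.integral_add_adjacent_intervals
      (hinv_int 1 x one_pos hx) (hinv_int x y hx hy)]
    ring
  -- upper bound for increments of G
  have hGbound : ∀ x y : ℝ, 0 < x → x ≤ y →
      G y - G x ≤ (y - x) * (1 / ω x) := by
    intro x y hx hxy
    have hy : 0 < y := hx.trans_le hxy
    rw [hGdiff x y hx hy]
    have hmono : ∫ τ in x..y, 1 / ω τ ≤ ∫ τ in x..y, 1 / ω x := by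
      refine intervalIntegral.integral_mono_on hxy (hinv_int x y hx hy)
        intervalIntegrable_const ?_
      intro τ hτ
      have hτ0 : 0 < τ := hx.trans_le hτ.1
      exact one_div_le_one_div_of_le (hω_pos x hx)
        (hωmono hx.le hτ0.le hτ.1)
    simpa [intervalIntegral.integral_const, smul_eq_mul] using hmono
  -- strict monotonicity of G on (0, ∞)
  have hGmono : ∀ x y : ℝ, 0 < x → x < y → G x < G y := by
    intro x y hx hxy
    have hy : 0 < y := hx.trans hxy
    have : (y - x) * (1 / ω y) ≤ ∫ τ in x..y, 1 / ω τ := by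
      have := intervalIntegral.integral_mono_on hxy.le
        (intervalIntegrable_const (c := 1 / ω y)) (hinv_int x y hx hy)
        (fun τ hτ => one_div_le_one_div_of_le (hω_pos τ (hx.trans_le hτ.1))
          (hωmono (hx.trans_le hτ.1).le hy.le hτ.2))
      simpa [intervalIntegral.integral_const, smul_eq_mul] using this
    have hωy : 0 < ω y := hω_pos y hy
    have hpos : 0 < ∫ τ in x..y, 1 / ω τ :=
      lt_of_lt_of_le (mul_pos (by linarith) (by positivity)) this
    have := hGdiff x y hx hy
    linarith
  -- main part
  intro t ht c hc hGc
  have ht0 : (0:ℝ) ≤ t := ht.1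
  have htsub : Set.Icc (0:ℝ) t ⊆ Set.Icc 0 T := Set.Icc_subset_Icc le_rfl ht.2
  set q : ℝ → ℝ := fun s => ω (u s) * g s with hq_def
  have hq_int : IntegrableOn q (Set.Icc 0 T) := by
    refine IntegrableOn.continuousOn_mul ?_ hg_int isCompact_Icc
    exact hω_cont.comp_continuousOn hu_cont
  have hq_nonneg : ∀ s ∈ Set.Icc (0:ℝ) T, 0 ≤ q s := fun s hs =>
    mul_nonneg (hωnn _ (hu_nonneg s hs)) (hg_nonneg s hs)
  have hsubT : ∀ x y : ℝ, x ∈ Set.Icc (0:ℝ) T → y ∈ Set.Icc (0:ℝ) T →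
      Set.uIcc x y ⊆ Set.Icc (0:ℝ) T := by
    intro x y hx hy
    rw [← Set.uIcc_of_le (le_trans hx.1 hx.2)]
    exact Set.uIcc_subset_uIcc (Set.mem_uIcc.mpr (Or.inl ⟨hx.1, hx.2⟩))
      (Set.mem_uIcc.mpr (Or.inl ⟨hy.1, hy.2⟩))
  have hq_ii : ∀ x y : ℝ, x ∈ Set.Icc (0:ℝ) T → y ∈ Set.Icc (0:ℝ) T →
      IntervalIntegrable q volume x y := fun x y hx hy =>
    (hq_int.mono_set (hsubT x y hx hy)).intervalIntegrable
  have hg_ii : ∀ x y : ℝ, x ∈ Set.Icc (0:ℝ) T → y ∈ Set.Icc (0:ℝ) T →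
      IntervalIntegrable g volume x y := fun x y hx hy =>
    (hg_int.mono_set (hsubT x y hx hy)).intervalIntegrable
  have h0T : (0:ℝ) ∈ Set.Icc (0:ℝ) T := ⟨le_rfl, ht0.trans ht.2⟩
  set v : ℝ → ℝ := fun x => a + ∫ s in (0:ℝ)..x, q s with hv_def
  have hv0 : v 0 = a := by simp [hv_def]
  have hvdiff : ∀ x y : ℝ, x ∈ Set.Icc (0:ℝ) T → y ∈ Set.Icc (0:ℝ) T →
      v y - v x = ∫ s in x..y, q s := by
    intro x y hx hy
    have := intervalIntegral.integral_add_adjacent_intervals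
      (hq_ii 0 x h0T hx) (hq_ii x y hx hy)
    simp only [hv_def]
    linarith [this]
  have hvmono : ∀ x y : ℝ, x ∈ Set.Icc (0:ℝ) T → y ∈ Set.Icc (0:ℝ) T → x ≤ y →
      v x ≤ v y := by
    intro x y hx hy hxy
    have h := hvdiff x y hx hy
    have hnn : 0 ≤ ∫ s in x..y, q s :=
      intervalIntegral.integral_nonneg hxy
        (fun s hs => hq_nonneg s ⟨hx.1.trans hs.1, hs.2.trans hy.2⟩)
    linarith
  have hva : ∀ x ∈ Set.Icc (0:ℝ) T, a ≤ v x := by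
    intro x hx
    have := hvmono 0 x h0T hx hx.1
    rw [hv0] at this; exact this
  have hvpos : ∀ x ∈ Set.Icc (0:ℝ) T, 0 < v x := fun x hx => ha.trans_le (hva x hx)
  have huv : ∀ x ∈ Set.Icc (0:ℝ) T, u x ≤ v x := fun x hx => hineq x hx
  have hv_cont : ContinuousOn v (Set.Icc 0 T) := by
    refine continuousOn_const.add ?_
    have := intervalIntegral.continuousOn_primitive_interval
      (a := (0:ℝ)) (b := T) (f := q) (μ := volume) ?_
    · rwa [Set.uIcc_of_le (h0T.2)] at this
    · rwa [Set.uIcc_of_le (h0T.2)]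
  -- key step inequality
  have hkey : ∀ x y : ℝ, x ∈ Set.Icc (0:ℝ) T → y ∈ Set.Icc (0:ℝ) T → x ≤ y →
      G (v y) - G (v x) ≤ (ω (v y) / ω (v x)) * ∫ s in x..y, g s := by
    intro x y hx hy hxy
    have hvx := hvpos x hx
    have hvy := hvpos y hy
    have h1 : G (v y) - G (v x) ≤ (v y - v x) * (1 / ω (v x)) :=
      hGbound (v x) (v y) hvx (hvmono x y hx hy hxy)
    have h2 : v y - v x ≤ ω (v y) * ∫ s in x..y, g s := by
      rw [hvdiff x y hx hy]
      have : ∫ s in x..y, q s ≤ ∫ s in x..y, ω (v y) * g s := by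
        refine intervalIntegral.integral_mono_on hxy (hq_ii x y hx hy)
          ((hg_ii x y hx hy).const_mul _) ?_
        intro s hs
        have hsT : s ∈ Set.Icc (0:ℝ) T := ⟨hx.1.trans hs.1, hs.2.trans hy.2⟩
        have hus : u s ≤ v y :=
          (huv s hsT).trans (hvmono s y hsT hy hs.2)
        have : ω (u s) ≤ ω (v y) :=
          hωmono (hu_nonneg s hsT) (hvpos y hy).le hus
        exact mul_le_mul_of_nonneg_right this (hg_nonneg s hsT)
      rw [intervalIntegral.integral_const_mul] at this
      exact this
    have hωx : 0 < ω (v x) := hω_pos _ hvx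
    have hωy : 0 ≤ ω (v y) := (hω_pos _ hvy).le
    calc G (v y) - G (v x) ≤ (v y - v x) * (1 / ω (v x)) := h1
      _ ≤ (ω (v y) * ∫ s in x..y, g s) * (1 / ω (v x)) := by
          apply mul_le_mul_of_nonneg_right h2 (by positivity)
      _ = (ω (v y) / ω (v x)) * ∫ s in x..y, g s := by ring
  -- epsilon version of the main estimate
  have hmain : ∀ ε : ℝ, 0 < ε →
      G (v t) ≤ G a + (1 + ε) * ∫ s in (0:ℝ)..t, g s := by
    intro ε hε
    by_contra hcon
    push_neg at hcon
    set ψ : ℝ → ℝ := fun x => G a + (1 + ε) * (∫ s in (0:ℝ)..x, g s) - G (v x) with hψ_def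
    have hψ0 : ψ 0 = 0 := by simp [hψ_def, hv0]
    have hψ_cont : ContinuousOn ψ (Set.Icc 0 t) := by
      have hgprim : ContinuousOn (fun x => ∫ s in (0:ℝ)..x, g s) (Set.Icc 0 T) := by
        have := intervalIntegral.continuousOn_primitive_interval
          (a := (0:ℝ)) (b := T) (f := g) (μ := volume) ?_
        · rwa [Set.uIcc_of_le (h0T.2)] at this
        · rwa [Set.uIcc_of_le (h0T.2)]
      have hGv : ContinuousOn (fun x => G (v x)) (Set.Icc 0 T) := by
        have hrep : ∀ x ∈ Set.Icc (0:ℝ) T,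
            G (v x) = G a + ∫ τ in a..(v x), 1 / ω τ := by
          intro x hx
          have := hGdiff a (v x) ha (hvpos x hx)
          linarith
        rw [continuousOn_congr hrep]
        refine continuousOn_const.add ?_
        have hvT : a ∈ Set.Icc (0:ℝ) T → True := fun _ => trivial
        have hprim : ContinuousOn (fun y => ∫ τ in a..y, 1 / ω τ) (Set.Icc a (v T)) := by
          have hint : IntegrableOn (fun τ => 1 / ω τ) (Set.uIcc a (v T)) volume := by
            rw [Set.uIcc_of_le (hva T (Set.right_mem_Icc.2 (ht0.trans ht.2)))]
            refine ((hinv.mono ?_).integrableOn_compact isCompact_Icc)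
            intro τ hτ
            exact ha.trans_le hτ.1
          have := intervalIntegral.continuousOn_primitive_interval
            (a := a) (b := v T) (f := fun τ => 1 / ω τ) (μ := volume) hint
          rwa [Set.uIcc_of_le (hva T (Set.right_mem_Icc.2 (ht0.trans ht.2)))] at this
        refine hprim.comp hv_cont ?_
        intro x hx
        exact ⟨hva x hx, hvmono x T hx (Set.right_mem_Icc.2 (ht0.trans ht.2)) hx.2⟩
      exact ((continuousOn_const.add
        (continuousOn_const.mul (hgprim.mono htsub))).sub (hGv.mono htsub))
    -- the bad set
    set B : Set ℝ := {x | x ∈ Set.Icc (0:ℝ) t ∧ ψ x < 0} with hB_def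
    have htB : t ∈ B := ⟨Set.right_mem_Icc.2 ht0, by simp only [hψ_def]; linarith⟩
    have hBne : B.Nonempty := ⟨t, htB⟩
    have hBbdd : BddBelow B := ⟨0, fun x hx => hx.1.1⟩
    set c₀ : ℝ := sInf B with hc₀_def
    have hc₀_lb : ∀ x ∈ B, c₀ ≤ x := fun x hx => csInf_le hBbdd hx
    have hc₀0 : 0 ≤ c₀ := le_csInf hBne (fun x hx => hx.1.1)
    have hc₀t : c₀ ≤ t := hc₀_lb t htB
    have hc₀mem : c₀ ∈ Set.Icc (0:ℝ) t := ⟨hc₀0, hc₀t⟩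
    have hc₀T : c₀ ∈ Set.Icc (0:ℝ) T := htsub hc₀mem
    -- ψ c₀ ≥ 0
    have hψc₀ : 0 ≤ ψ c₀ := by
      by_contra hneg
      push_neg at hneg
      rcases eq_or_lt_of_le hc₀0 with h0 | h0
      · rw [← h0] at hneg; rw [hψ0] at hneg; exact absurd hneg (lt_irrefl 0)
      · have hcw : ContinuousWithinAt ψ (Set.Icc 0 t) c₀ := hψ_cont c₀ hc₀mem
        have hev : ∀ᶠ x in nhdsWithin c₀ (Set.Icc 0 t), ψ x < 0 :=
          hcw.eventually_lt continuousWithinAt_const hneg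
        rcases Metric.mem_nhdsWithin_iff.mp hev with ⟨δ, hδ, hδ'⟩
        set x := max (c₀ - δ/2) 0 with hx_def
        have hx0 : 0 ≤ x := le_max_right _ _
        have hxlt : x < c₀ := max_lt (by linarith) h0
        have hxmem : x ∈ Set.Icc (0:ℝ) t := ⟨hx0, hxlt.le.trans hc₀t⟩
        have hxd : dist x c₀ < δ := by
          rw [Real.dist_eq, abs_sub_lt_iff]
          constructor
          · linarith
          · have : c₀ - δ/2 ≤ x := le_max_left _ _
            linarith
        have hxB : x ∈ B := ⟨hxmem, hδ' ⟨Metric.mem_ball.mpr hxd, hxmem⟩⟩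
        exact absurd (hc₀_lb x hxB) (not_le.2 hxlt)
    -- right extension: find δ with ψ y ≥ ψ c₀ for y ∈ [c₀, c₀+δ] ∩ [0,t]
    have hωvc₀ : 0 < ω (v c₀) := hω_pos _ (hvpos c₀ hc₀T)
    have hcw2 : ContinuousWithinAt (fun x => ω (v x)) (Set.Icc 0 t) c₀ :=
      (hω_cont.comp_continuousOn (hv_cont.mono htsub)) c₀ hc₀mem
    have hev2 : ∀ᶠ x in nhdsWithin c₀ (Set.Icc 0 t),
        ω (v x) < (1 + ε) * ω (v c₀) := by
      refine hcw2.eventually_lt continuousWithinAt_const ?_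
      show ω (v c₀) < (1 + ε) * ω (v c₀)
      nlinarith
    rcases Metric.mem_nhdsWithin_iff.mp hev2 with ⟨δ, hδpos, hδ⟩
    -- get a point of B within (c₀, c₀ + δ)
    have hlt : c₀ < c₀ + δ := by linarith
    rcases exists_lt_of_csInf_lt hBne (hc₀_def ▸ hlt) with ⟨b, hbB, hbδ⟩
    have hbc₀ : c₀ ≤ b := hc₀_lb b hbB
    have hbmem : b ∈ Set.Icc (0:ℝ) t := hbB.1
    have hbT : b ∈ Set.Icc (0:ℝ) T := htsub hbmem
    -- show ψ b ≥ ψ c₀ ≥ 0, contradiction with ψ b < 0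
    have hgnn : 0 ≤ ∫ s in c₀..b, g s :=
      intervalIntegral.integral_nonneg hbc₀
        (fun s hs => hg_nonneg s ⟨hc₀0.trans hs.1, hs.2.trans hbT.2⟩)
    have hgb : ∫ s in (0:ℝ)..b, g s = (∫ s in (0:ℝ)..c₀, g s) + ∫ s in c₀..b, g s :=
      (intervalIntegral.integral_add_adjacent_intervals
        (hg_ii 0 c₀ h0T hc₀T) (hg_ii c₀ b hc₀T hbT)).symm
    have hstep : G (v b) - G (v c₀) ≤ (1 + ε) * ∫ s in c₀..b, g s := by
      have hk := hkey c₀ b hc₀T hbT hbc₀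
      have hrat : ω (v b) / ω (v c₀) ≤ 1 + ε := by
        have hb' : ω (v b) < (1 + ε) * ω (v c₀) := by
          refine hδ ⟨Metric.mem_ball.mpr ?_, hbmem⟩
          rw [Real.dist_eq, abs_sub_lt_iff]
          constructor <;> linarith
        rw [div_le_iff₀ hωvc₀]
        nlinarith
      calc G (v b) - G (v c₀) ≤ (ω (v b) / ω (v c₀)) * ∫ s in c₀..b, g s := hk
        _ ≤ (1 + ε) * ∫ s in c₀..b, g s := mul_le_mul_of_nonneg_right hrat hgnn
    have hψb : 0 ≤ ψ b := by
      have : ψ b - ψ c₀ = (1 + ε) * (∫ s in c₀..b, g s) - (G (v b) - G (v c₀)) := by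
        simp only [hψ_def, hgb]; ring
      linarith
    exact absurd hψb (not_le.2 hbB.2)
  -- pass to the limit ε → 0
  have hgt_nn : 0 ≤ ∫ s in (0:ℝ)..t, g s :=
    intervalIntegral.integral_nonneg ht0
      (fun s hs => hg_nonneg s ⟨hs.1, hs.2.trans ht.2⟩)
  have hGvt : G (v t) ≤ G a + ∫ s in (0:ℝ)..t, g s := by
    by_contra hcon
    push_neg at hcon
    set d : ℝ := G (v t) - (G a + ∫ s in (0:ℝ)..t, g s) with hd_def
    have hd : 0 < d := by simp only [hd_def]; linarith
    have hε : 0 < d / (2 * ((∫ s in (0:ℝ)..t, g s) + 1)) := by positivity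
    have := hmain _ hε
    have hb : (d / (2 * ((∫ s in (0:ℝ)..t, g s) + 1))) * (∫ s in (0:ℝ)..t, g s) ≤ d / 2 := by
      rw [div_mul_eq_mul_div, div_le_div_iff₀ (by positivity) two_pos]
      nlinarith
    nlinarith
  -- conclude
  have hvt : v t ≤ c := by
    by_contra hcon
    push_neg at hcon
    have := hGmono c (v t) hc hcon
    linarith [hGc ▸ this]
  exact (huv t ht).trans hvt
end

section
/- Almost-periodic orbit selection: let T : 𝕋² → 𝕋² be continuous and ρ₀ > 0. Then there exist x ∈ 𝕋², an integer N ≥ 1, and 0 < ρ ≤ ρ₀ such that d(x, T^N(x)) ≤ ρ while d(T^n(x), x) ≥ ρ and d(T^n(x), T^N(x)) ≥ ρ for all n = 1, …, N−1. -/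
open MeasureTheory Filter

/-- The flat two-dimensional torus, modeled as a product of two circles. -/
abbrev T2 := AddCircle (1:ℝ) × AddCircle (1:ℝ)

/-- The canonical projection `ℝ² → 𝕋²`. -/
noncomputable def tor (p : ℝ × ℝ) : T2 := ((p.1 : AddCircle (1:ℝ)), (p.2 : AddCircle (1:ℝ)))

/-- The ω-Hölder seminorm `[f]_ω = sup_{x ≠ y} |f x - f y| / ω (d x y)`. -/
noncomputable def omegaSeminorm {α : Type*} [MetricSpace α] (ω : ℝ → ℝ) (f : α → ℝ × ℝ) : ℝ :=
  sSup {c | ∃ x y : α, x ≠ y ∧ c = dist (f x) (f y) / ω (dist x y)}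

/-- The ω-norm `‖f‖_ω = ‖f‖_{C⁰} + [f]_ω`. -/
noncomputable def omegaNorm {α : Type*} [MetricSpace α] (ω : ℝ → ℝ) (f : α → ℝ × ℝ) : ℝ :=
  (⨆ x : α, ‖f x‖) + omegaSeminorm ω f

/-- `X` is the flow of the velocity field `b` (ODE in integral form on the torus). -/
def IsFlow (b : ℝ → T2 → ℝ × ℝ) (X : ℝ → T2 → T2) : Prop :=
  ∀ (x : T2) (t : ℝ), X t x = x + tor (∫ s in (0:ℝ)..t, b s (X s x))

/-- `f` has vanishing ω-oscillation. -/
def VanishingOsc {α : Type*} [MetricSpace α] (ω : ℝ → ℝ) (f : α → ℝ × ℝ) : Prop :=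
  ∀ ε > 0, ∃ r > 0, ∀ x y : α, x ≠ y → dist x y < r → dist (f x) (f y) ≤ ε * ω (dist x y)

/-- Almost-periodic orbit selection: for any continuous `T : 𝕋² → 𝕋²` and `ρ₀ > 0`
there are `x`, `N ≥ 1` and `0 < ρ ≤ ρ₀` with `d(x, T^N x) ≤ ρ`, while
`d(T^n x, x) ≥ ρ` and `d(T^n x, T^N x) ≥ ρ` for all `n = 1, …, N−1`. -/
theorem almost_periodic_orbit_selection
    (T : T2 → T2) (hT : Continuous T) (ρ₀ : ℝ) (hρ₀ : 0 < ρ₀) :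
    ∃ (x : T2) (N : ℕ) (ρ : ℝ), 1 ≤ N ∧ 0 < ρ ∧ ρ ≤ ρ₀ ∧
      dist x (T^[N] x) ≤ ρ ∧
      ∀ n : ℕ, 1 ≤ n → n < N →
        ρ ≤ dist (T^[n] x) x ∧ ρ ≤ dist (T^[n] x) (T^[N] x) := by
  classical
  set y : T2 := 0 with hy
  -- Step 1: two iterates within distance ρ₀
  obtain ⟨t, htfin, htcov⟩ :=
    (Metric.totallyBounded_iff.mp (isCompact_univ : IsCompact (Set.univ : Set T2)).totallyBounded) (ρ₀/3) (by positivity)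
  have hc : ∀ n : ℕ, ∃ z ∈ t, T^[n] y ∈ Metric.ball z (ρ₀/3) := by
    intro n
    have := htcov (Set.mem_univ (T^[n] y))
    simpa using this
  choose c hc1 hc2 using hc
  haveI := htfin.to_subtype
  obtain ⟨i, j, hij, hcij⟩ :=
    Finite.exists_ne_map_eq_of_infinite (fun n : ℕ => (⟨c n, hc1 n⟩ : t))
  have hcij' : c i = c j := congrArg Subtype.val hcij
  have key : ∀ i j : ℕ, c i = c j → dist (T^[i] y) (T^[j] y) < ρ₀ := by
    intro i j h
    calc dist (T^[i] y) (T^[j] y) ≤ dist (T^[i] y) (c i) + dist (c j) (T^[j] y) := by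
          rw [h]; exact dist_triangle _ _ _
    _ < ρ₀/3 + ρ₀/3 := by
          gcongr
          · exact Metric.mem_ball.mp (hc2 i)
          · rw [dist_comm]; exact Metric.mem_ball.mp (hc2 j)
    _ < ρ₀ := by linarith
  obtain ⟨i₀, j₀, hij₀, hd₀⟩ : ∃ i₀ j₀ : ℕ, i₀ < j₀ ∧ dist (T^[i₀] y) (T^[j₀] y) < ρ₀ := by
    rcases hij.lt_or_gt with h | h
    · exact ⟨i, j, h, key i j hcij'⟩
    · exact ⟨j, i, h, key j i hcij'.symm⟩
  set M := j₀ with hM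
  -- Step 2: minimize over pairs
  set P : Finset (ℕ × ℕ) :=
    (Finset.range (M+1) ×ˢ Finset.range (M+1)).filter (fun p => p.1 < p.2) with hP
  have hmemP : ∀ a b : ℕ, a < b → b ≤ M → (a, b) ∈ P := by
    intro a b h1 h2
    simp [hP, Finset.mem_filter, Finset.mem_product, h1]
    omega
  obtain ⟨⟨α, β⟩, hmem, hmin⟩ :=
    P.exists_min_image (fun p => dist (T^[p.1] y) (T^[p.2] y))
      ⟨(i₀, j₀), hmemP i₀ j₀ hij₀ le_rfl⟩
  have hαβ : α < β ∧ β ≤ M := by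
    simp [hP, Finset.mem_filter, Finset.mem_product] at hmem
    omega
  set ρ' := dist (T^[α] y) (T^[β] y) with hρ'
  have hρ'ρ₀ : ρ' < ρ₀ :=
    lt_of_le_of_lt (hmin (i₀, j₀) (hmemP i₀ j₀ hij₀ le_rfl)) hd₀
  have hsub : β - α + α = β := Nat.sub_add_cancel hαβ.1.le
  rcases eq_or_lt_of_le (dist_nonneg : (0:ℝ) ≤ ρ') with h0 | hpos
  · -- periodic case
    set z := T^[α] y with hz
    have hper : T^[β - α] z = z := by
      have heq : T^[β] y = T^[α] y :=
        (dist_eq_zero.mp (show dist (T^[α] y) (T^[β] y) = 0 from h0.symm)).symm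
      rw [hz, ← Function.iterate_add_apply, hsub, heq]
    have hex : ∃ n, 1 ≤ n ∧ T^[n] z = z := ⟨β - α, by omega, hper⟩
    set N := Nat.find hex with hN
    have hN1 : 1 ≤ N := (Nat.find_spec hex).1
    have hNz : T^[N] z = z := (Nat.find_spec hex).2
    set s : Finset ℝ := insert ρ₀ ((Finset.Ico 1 N).image (fun n => dist (T^[n] z) z)) with hs
    have hsne : s.Nonempty := ⟨ρ₀, Finset.mem_insert_self _ _⟩
    set ρ := s.min' hsne with hρdef
    have hρpos : 0 < ρ := by
      rw [hρdef, Finset.lt_min'_iff]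
      intro r hr
      rw [hs, Finset.mem_insert] at hr
      rcases hr with rfl | hr
      · exact hρ₀
      · obtain ⟨n, hn, rfl⟩ := Finset.mem_image.mp hr
        rw [Finset.mem_Ico] at hn
        have hne : T^[n] z ≠ z := by
          intro h
          exact Nat.find_min hex hn.2 ⟨hn.1, h⟩
        exact dist_pos.mpr hne
    refine ⟨z, N, ρ, hN1, hρpos, Finset.min'_le _ _ (Finset.mem_insert_self _ _), ?_, ?_⟩
    · rw [hNz, dist_self]; exact hρpos.le
    · intro n hn1 hnN
      have hmem' : dist (T^[n] z) z ∈ s :=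
        Finset.mem_insert_of_mem (Finset.mem_image.mpr ⟨n, Finset.mem_Ico.mpr ⟨hn1, hnN⟩, rfl⟩)
      refine ⟨Finset.min'_le _ _ hmem', ?_⟩
      rw [hNz]; exact Finset.min'_le _ _ hmem'
  · -- non-degenerate case
    refine ⟨T^[α] y, β - α, ρ', by omega, hpos, hρ'ρ₀.le, ?_, ?_⟩
    · rw [← Function.iterate_add_apply, hsub]
    · intro n hn1 hnN
      rw [← Function.iterate_add_apply, ← Function.iterate_add_apply, hsub]
      constructor
      · rw [dist_comm]
        exact hmin (α, n + α) (hmemP α (n + α) (by omega) (by omega))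
      · exact hmin (n + α, β) (hmemP (n + α) β (by omega) hαβ.2)
end
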